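/- Let X be a compact Hausdorff space, A a commutative Banach algebra, and σ ∈ Hom(A) with dense range. If A is σ-weakly amenable, then C(X,A) is σ̃-weakly amenable, where σ̃(f) = σ ∘ f. -/

import Mathlib

/-!
Since `A` is commutative, `σ`-inner derivations into `A*` vanish, so `σ`-weak amenability says
that every `σ`-derivation `A → A*` is zero; applied to `a ↦ T a • T` it shows that a functional
killing all products is zero.

Let `D` be a `σ̃`-derivation of `C(X, A)`. For fixed `g`, `(a, b) ↦ D (const a) (const b * g)` is
a `σ`-derivation of `A`; with the density of the span of the functions `φ • const b` (partition
of unity) this gives `D (const a) = 0`. Then, for fixed `b, c`, the form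
`Q φ K = D (φ • const b) (const (σ c) * K)` is a derivation of the C⋆-algebra `C(X, ℂ)` into a
symmetric module: `Q (φ * ψ) K = Q φ (ψ • K) + Q ψ (φ • K)`. For a unitary `u` this gives
`Q (u ^ (n + 1)) (u⁻ⁿ • K) = (n + 1) • Q u K` with a left side bounded in `n`, so `Q u = 0`, and
unitaries span `C(X, ℂ)`. Hence `D (φ • const (b * c)) = 0`, and `D = 0` by density again.
-/

/-- `σ`-weak amenability of a Banach algebra `B`: every bounded `σ`-derivation
`D : B → B*` into the dual bimodule `B*` (with actions `(b·Λ)(x) = Λ(x b)`,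
`(Λ·b)(x) = Λ(b x)`) is `σ`-inner. -/
def SigmaWeaklyAmenable (B : Type u) [NonUnitalNormedRing B] [NormedSpace ℂ B]
    (s : B → B) : Prop :=
  ∀ D : B →L[ℂ] (B →L[ℂ] ℂ),
    (∀ a b x, D (a * b) x = D a (s b * x) + D b (x * s a)) →
    ∃ Λ : B →L[ℂ] ℂ, ∀ a x, D a x = Λ (x * s a) - Λ (s a * x)

open Set ContinuousMap

def IsSigmaDerivation {B : Type*} [NonUnitalNormedRing B] [NormedSpace ℂ B] (s : B → B)
    (D : B →L[ℂ] B →L[ℂ] ℂ) : Prop :=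
  ∀ a b x, D (a * b) x = D a (s b * x) + D b (x * s a)

namespace SigmaWeaklyAmenable

variable {B : Type*} [NonUnitalNormedRing B] [NormedSpace ℂ B] {s : B → B}

theorem eq_zero_of_isSigmaDerivation (hcomm : ∀ a b : B, a * b = b * a)
    (h : SigmaWeaklyAmenable B s) {D : B →L[ℂ] B →L[ℂ] ℂ} (hD : IsSigmaDerivation s D) :
    D = 0 := by
  obtain ⟨Λ, hΛ⟩ := h D hD
  ext a x
  simp [hΛ, hcomm (s a) x]

/-- The map `a ↦ T a • T` is an `s`-derivation. -/
theorem eq_zero_of_map_mul_eq_zero (hcomm : ∀ a b : B, a * b = b * a)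
    (h : SigmaWeaklyAmenable B s) {T : B →L[ℂ] ℂ} (hT : ∀ a b, T (a * b) = 0) : T = 0 := by
  have hTT : T.smulRight T = 0 :=
    h.eq_zero_of_isSigmaDerivation hcomm fun a b x ↦ by simp [hT]
  ext a
  simpa using congr($hTT a a)

end SigmaWeaklyAmenable

namespace ContinuousMap

variable {X : Type*} [TopologicalSpace X] [CompactSpace X]

instance instIsBoundedSMul' {R M : Type*} [SeminormedRing R] [SeminormedAddCommGroup M]
    [Module R M] [IsBoundedSMul R M] : IsBoundedSMul C(X, R) C(X, M) :=
  .of_norm_smul_le fun φ f ↦ (norm_le _ (by positivity)).mpr fun x ↦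
    (norm_smul_le (φ x) (f x)).trans
      (mul_le_mul (φ.norm_coe_le_norm x) (f.norm_coe_le_norm x) (norm_nonneg _) (norm_nonneg _))

noncomputable def smulConstL {𝕜 E : Type*} [NontriviallyNormedField 𝕜]
    [SeminormedAddCommGroup E] [NormedSpace 𝕜 E] : C(X, 𝕜) →L[𝕜] E →L[𝕜] C(X, E) :=
  LinearMap.mkContinuous₂
    (LinearMap.mk₂ 𝕜 (fun (φ : C(X, 𝕜)) (b : E) ↦ φ • const X b) (fun _ _ _ ↦ add_smul _ _ _)
      (fun r φ b ↦ by ext x; simp [mul_smul]) (fun _ _ _ ↦ by ext x; simp)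
      (fun r φ b ↦ by ext x; simp [smul_comm r]) : C(X, 𝕜) →ₗ[𝕜] E →ₗ[𝕜] C(X, E))
    1 fun φ b ↦ by
      refine (norm_smul_le φ (const X b)).trans ?_
      rw [one_mul]
      gcongr
      exact (norm_le _ (norm_nonneg b)).mpr fun _ ↦ le_rfl

theorem dense_span_smul_const [T2Space X] {𝕜 E : Type*} [RCLike 𝕜] [SeminormedAddCommGroup E]
    [NormedSpace 𝕜 E] :
    Dense (Submodule.span 𝕜 {f : C(X, E) | ∃ (φ : C(X, 𝕜)) (b : E), φ • const X b = f} :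
      Set C(X, E)) := by
  let _ := NormedSpace.restrictScalars ℝ 𝕜 E
  refine fun f ↦ Metric.mem_closure_iff.mpr fun ε hε ↦ ?_
  let U : X → Set X := fun t ↦ {x | dist (f x) (f t) < ε / 2}
  have hU : ∀ t, IsOpen (U t) := fun t ↦ isOpen_lt (by fun_prop) continuous_const
  obtain ⟨s, hs⟩ := isCompact_univ.elim_finite_subcover U hU
    fun x _ ↦ mem_iUnion.2 ⟨x, by simp [U, hε]⟩
  obtain ⟨p, hp⟩ := PartitionOfUnity.exists_isSubordinate isClosed_univ (fun t : s ↦ U t)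
    (fun t ↦ hU t) (by simpa [iUnion_subtype] using hs)
  let g : C(X, E) := ∑ t : s, (ContinuousMap.mk ((↑) : ℝ → 𝕜)).comp (p t) • const X (f t)
  have hg : ∀ x, g x = ∑ᶠ t : s, p t x • f t := fun x ↦ by
    simp only [g, coe_sum, Finset.sum_apply, smul_apply', comp_apply, coe_mk, const_apply,
      finsum_eq_sum_of_fintype]
    rfl -- `ℝ` acts on `E` through `𝕜`
  refine ⟨g, sum_mem fun t _ ↦ Submodule.subset_span ⟨_, _, rfl⟩, ?_⟩
  refine lt_of_le_of_lt ((dist_le (by positivity)).mpr fun x ↦ ?_) (half_lt_self hε)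
  rw [hg, dist_comm]
  refine p.finsum_smul_mem_convex (g := fun t _ ↦ f t) (mem_univ x) (fun t ht ↦ ?_)
    (convex_closedBall (f x) (ε / 2))
  exact Metric.mem_closedBall'.mpr (hp t (subset_closure ht)).le

end ContinuousMap

lemma nonpos_of_forall_succ_mul_le {x C : ℝ} (h : ∀ n : ℕ, ((n : ℝ) + 1) * x ≤ C) : x ≤ 0 := by
  by_contra! hx
  obtain ⟨n, hn⟩ := exists_nat_gt (C / x)
  have := h n
  rw [div_lt_iff₀ hx] at hn
  linarith

lemma map_pow_succ_of_leibniz {B E : Type*} [Ring B] [Module ℂ B] [TopologicalSpace B]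
    [SeminormedAddCommGroup E] [NormedSpace ℂ E] [Module B E] (Q : B →L[ℂ] E →L[ℂ] ℂ)
    (hQ : ∀ a b m, Q (a * b) m = Q a (b • m) + Q b (a • m)) (u : B) (m : E) (n : ℕ) :
    Q (u ^ (n + 1)) m = (n + 1) * Q u (u ^ n • m) := by
  induction n generalizing m with
  | zero => simp
  | succ n ih =>
    rw [pow_succ', hQ, ih, smul_smul, ← pow_succ]
    push_cast
    ring

theorem CStarAlgebra.eq_zero_of_leibniz {B E : Type*} [CStarAlgebra B] [SeminormedAddCommGroup E]
    [NormedSpace ℂ E] [Module B E] [IsBoundedSMul B E] (Q : B →L[ℂ] E →L[ℂ] ℂ)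
    (hQ : ∀ a b m, Q (a * b) m = Q a (b • m) + Q b (a • m)) : Q = 0 := by
  have norm_le_one : ∀ U : unitary B, ‖(U : B)‖ ≤ 1 := fun U ↦ by
    cases subsingleton_or_nontrivial B
    · simp [Subsingleton.elim (U : B) 0]
    · exact (CStarRing.norm_coe_unitary U).le
  have unitary_eq : ∀ U : unitary B, Q U = 0 := by
    intro U
    ext m
    refine norm_le_zero_iff.mp (nonpos_of_forall_succ_mul_le (C := ‖Q‖ * ‖m‖) fun n ↦ ?_)
    have hm : m = ((U ^ n : unitary B) : B) • ((U⁻¹ ^ n : unitary B) : B) • m := by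
      rw [smul_smul, ← Submonoid.coe_mul, inv_pow, mul_inv_cancel, OneMemClass.coe_one, one_smul]
    calc ((n : ℝ) + 1) * ‖Q U m‖
        = ‖Q ((U ^ (n + 1) : unitary B) : B) (((U⁻¹ ^ n : unitary B) : B) • m)‖ := by
          rw [SubmonoidClass.coe_pow, map_pow_succ_of_leibniz Q hQ, ← SubmonoidClass.coe_pow,
            ← hm, norm_mul]
          norm_cast
      _ ≤ ‖Q‖ * ‖((U ^ (n + 1) : unitary B) : B)‖ * (‖((U⁻¹ ^ n : unitary B) : B)‖ * ‖m‖) :=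
          (Q.le_opNorm₂ _ _).trans (by gcongr; exact norm_smul_le _ _)
      _ ≤ ‖Q‖ * 1 * (1 * ‖m‖) := by gcongr <;> apply norm_le_one
      _ = ‖Q‖ * ‖m‖ := by ring
  refine ContinuousLinearMap.ext_on (s := unitary B) (by simp [CStarAlgebra.span_unitary]) ?_
  intro u hu
  exact unitary_eq ⟨u, hu⟩

section PointwiseMap

variable {X A : Type*} [TopologicalSpace X]

lemma map_const_of_apply_eq [TopologicalSpace A] {σ : A → A} {σt : C(X, A) → C(X, A)}
    (hσt : ∀ f x, σt f x = σ (f x)) (a : A) : σt (const X a) = const X (σ a) := by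
  ext x; simp [hσt]

lemma map_smul_of_apply_eq [NormedAddCommGroup A] [NormedSpace ℂ A] {σ : A →L[ℂ] A}
    {σt : C(X, A) → C(X, A)} (hσt : ∀ f x, σt f x = σ (f x)) (φ : C(X, ℂ)) (f : C(X, A)) :
    σt (φ • f) = φ • σt f := by
  ext x; simp [hσt]

end PointwiseMap

section

variable {X A : Type*} [TopologicalSpace X] [CompactSpace X] [NonUnitalNormedRing A]
  [NormedSpace ℂ A]

theorem SigmaWeaklyAmenable.eq_zero_of_map_smul_const_mul [T2Space X]
    (hcomm : ∀ a b : A, a * b = b * a) {σ : A → A} (hwa : SigmaWeaklyAmenable A σ)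
    {Λ : C(X, A) →L[ℂ] ℂ} (hΛ : ∀ (φ : C(X, ℂ)) (b c : A), Λ (φ • const X (b * c)) = 0) :
    Λ = 0 := by
  refine ContinuousLinearMap.ext_on dense_span_smul_const ?_
  rintro _ ⟨φ, b, rfl⟩
  have : Λ ∘L smulConstL φ = 0 := hwa.eq_zero_of_map_mul_eq_zero hcomm (hΛ φ)
  exact congr($this b)

namespace IsSigmaDerivation

variable {σ : A →L[ℂ] A} {σt : C(X, A) →L[ℂ] C(X, A)} {D : C(X, A) →L[ℂ] C(X, A) →L[ℂ] ℂ}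

lemma apply_mul_const (hσt : ∀ f x, σt f x = σ (f x)) (hD : IsSigmaDerivation σt D)
    (hconst : ∀ a, D (const X a) = 0) (F H : C(X, A)) (c : A) :
    D (F * const X c) H = D F (const X (σ c) * H) := by
  rw [hD, map_const_of_apply_eq hσt, hconst]
  exact add_zero _

variable [IsScalarTower ℂ A A] [SMulCommClass ℂ A A]

lemma apply_const_const_mul_eq_zero (hcomm : ∀ a b : A, a * b = b * a)
    (hσt : ∀ f x, σt f x = σ (f x)) (hD : IsSigmaDerivation σt D)
    (hwa : SigmaWeaklyAmenable A σ) (g : C(X, A)) (a b : A) :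
    D (const X a) (const X b * g) = 0 := by
  let C := ContinuousLinearMap.const ℂ X (M := A)
  let d : A →L[ℂ] A →L[ℂ] ℂ :=
    ((D ∘L C).flip ∘L ((ContinuousLinearMap.mul ℂ _).flip g ∘L C)).flip
  have hd : IsSigmaDerivation σ d := fun a b x ↦ by
    change D (const X (a * b)) (const X x * g)
      = D (const X a) (const X (σ b * x) * g) + D (const X b) (const X (x * σ a) * g)
    have hab : const X (a * b) = const X a * const X b := rfl
    rw [hab, hD, map_const_of_apply_eq hσt, map_const_of_apply_eq hσt]
    congr 2 <;> ext y <;> simp [mul_assoc, hcomm (g y)]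
  exact congr($(hwa.eq_zero_of_isSigmaDerivation hcomm hd) a b)

lemma apply_const_eq_zero [T2Space X] (hcomm : ∀ a b : A, a * b = b * a)
    (hσt : ∀ f x, σt f x = σ (f x)) (hD : IsSigmaDerivation σt D)
    (hwa : SigmaWeaklyAmenable A σ) (a : A) : D (const X a) = 0 := by
  refine hwa.eq_zero_of_map_smul_const_mul hcomm fun φ b c ↦ ?_
  have : φ • const X (b * c) = const X b * (φ • const X c) := by
    ext x; simp [mul_smul_comm]
  rw [this, hD.apply_const_const_mul_eq_zero hcomm hσt hwa]

lemma apply_smul_const_leibniz (hcomm : ∀ a b : A, a * b = b * a)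
    (hσt : ∀ f x, σt f x = σ (f x)) (hD : IsSigmaDerivation σt D)
    (hconst : ∀ a, D (const X a) = 0) (b c : A) (φ ψ : C(X, ℂ)) (K : C(X, A)) :
    D ((φ * ψ) • const X b) (const X (σ c) * K)
      = D (φ • const X b) (const X (σ c) * (ψ • K))
        + D (ψ • const X b) (const X (σ c) * (φ • K)) := by
  have swap : ∀ K', D (ψ • const X c) (const X (σ b) * K')
      = D (ψ • const X b) (const X (σ c) * K') := fun K' ↦ by
    rw [← hD.apply_mul_const hσt hconst, ← hD.apply_mul_const hσt hconst]
    congr 2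
    ext x
    simp [smul_mul_assoc, hcomm b c]
  calc D ((φ * ψ) • const X b) (const X (σ c) * K)
      = D ((φ * ψ) • const X b * const X c) K := (hD.apply_mul_const hσt hconst _ _ _).symm
    _ = D ((φ • const X b) * (ψ • const X c)) K := by
      congr 2; ext x; simp [smul_mul_assoc, mul_smul_comm, smul_smul, mul_comm (φ x)]
    _ = D (φ • const X b) (const X (σ c) * (ψ • K))
        + D (ψ • const X c) (const X (σ b) * (φ • K)) := by
      rw [hD, map_smul_of_apply_eq hσt, map_smul_of_apply_eq hσt, map_const_of_apply_eq hσt,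
        map_const_of_apply_eq hσt]
      congr 2 <;> ext x <;> simp [smul_mul_assoc, mul_smul_comm, hcomm (K x)]
    _ = _ := by rw [swap]

lemma apply_smul_const_mul_eq_zero (hcomm : ∀ a b : A, a * b = b * a)
    (hσt : ∀ f x, σt f x = σ (f x)) (hD : IsSigmaDerivation σt D)
    (hconst : ∀ a, D (const X a) = 0) (φ : C(X, ℂ)) (b c : A) (H : C(X, A)) :
    D (φ • const X (b * c)) H = 0 := by
  let Q : C(X, ℂ) →L[ℂ] C(X, A) →L[ℂ] ℂ :=
    ((D ∘L smulConstL.flip b).flip ∘L ContinuousLinearMap.mul ℂ _ (const X (σ c))).flip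
  have hQ : Q = 0 :=
    CStarAlgebra.eq_zero_of_leibniz Q (hD.apply_smul_const_leibniz hcomm hσt hconst b c)
  have : φ • const X (b * c) = φ • const X b * const X c := by
    ext x; simp [smul_mul_assoc]
  rw [this, hD.apply_mul_const hσt hconst]
  exact congr($hQ φ H)

end IsSigmaDerivation

end

theorem stmt19_general {X A : Type u} [TopologicalSpace X] [CompactSpace X] [T2Space X]
    [NonUnitalNormedRing A] [NormedSpace ℂ A] [IsScalarTower ℂ A A]
    [SMulCommClass ℂ A A]
    (hcomm : ∀ a b : A, a * b = b * a)
    (σ : A →L[ℂ] A) (hwa : SigmaWeaklyAmenable A σ)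
    (σt : C(X, A) →L[ℂ] C(X, A)) (hσt : ∀ (f : C(X, A)) (x : X), σt f x = σ (f x)) :
    SigmaWeaklyAmenable C(X, A) σt := by
  intro D (hD : IsSigmaDerivation σt D)
  have hconst : ∀ a, D (const X a) = 0 := hD.apply_const_eq_zero hcomm hσt hwa
  have hD0 : D = 0 := by
    ext F H
    have : D.flip H = 0 := hwa.eq_zero_of_map_smul_const_mul hcomm fun φ b c ↦
      hD.apply_smul_const_mul_eq_zero hcomm hσt hconst φ b c H
    exact congr($this F)
  exact ⟨0, by simp [hD0]⟩

/-- let `X` be a compact Hausdorff space, `A` a commutative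
Banach algebra and `σ ∈ Hom(A)` with dense range. If `A` is `σ`-weakly
amenable, then `C(X,A)` is `σ̃`-weakly amenable, where `σ̃ f = σ ∘ f`. -/
theorem stmt19 {X A : Type u} [TopologicalSpace X] [CompactSpace X] [T2Space X]
    [NonUnitalNormedRing A] [NormedSpace ℂ A] [IsScalarTower ℂ A A]
    [SMulCommClass ℂ A A] [CompleteSpace A]
    (hcomm : ∀ a b : A, a * b = b * a)
    (σ : A →L[ℂ] A) (hσ : ∀ a b : A, σ (a * b) = σ a * σ b)
    (hdense : DenseRange σ) (hwa : SigmaWeaklyAmenable A σ)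
    (σt : C(X, A) →L[ℂ] C(X, A)) (hσt : ∀ (f : C(X, A)) (x : X), σt f x = σ (f x)) :
    SigmaWeaklyAmenable C(X, A) σt :=
  stmt19_general hcomm σ hwa σt hσt
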